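/- Let M and H be n×n real symmetric positive definite matrices. Then ‖M^{1/2} − H‖_F ≤ (n^{1/2} ‖M − H²‖_F)^{1/2}, and ‖M^{1/2} − H‖₂ ≤ min( ‖M − H²‖₂ / √(λ_min(M)), (n^{1/2} ‖M − H²‖_F)^{1/2} ), where λ_min(M) is the smallest eigenvalue of M. (This is Lemma 'forward' of the paper with M = W^β for β = ±1.) -/

import Mathlib

open Matrix

/-- The Frobenius norm of a real matrix. -/
noncomputable def frobNorm {n m : ℕ} (M : Matrix (Fin n) (Fin m) ℝ) : ℝ :=
  Real.sqrt (∑ i, ∑ j, (M i j) ^ 2)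

/-- The spectral norm (largest singular value) of a real square matrix. -/
noncomputable def specNorm {n : ℕ} (M : Matrix (Fin n) (Fin n) ℝ) : ℝ :=
  ⨆ i, Real.sqrt ((show (Mᵀ * M).IsHermitian by
    simpa using Matrix.isHermitian_conjTranspose_mul_self M).eigenvalues i)

/-- The square root of a positive semidefinite matrix (as in Mathlib of December 2024). -/
noncomputable def Matrix.PosSemidef.sqrt {n : Type*} [Fintype n] [DecidableEq n]
    {A : Matrix n n ℝ} (hA : A.PosSemidef) : Matrix n n ℝ :=
  hA.1.eigenvectorUnitary.1 * diagonal ((↑) ∘ (√·) ∘ hA.1.eigenvalues) *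
    (star hA.1.eigenvectorUnitary : Matrix n n ℝ)

/-- The smallest eigenvalue of a real symmetric matrix. -/
noncomputable def lambdaMin {n : ℕ} {M : Matrix (Fin n) (Fin n) ℝ}
    (hM : M.IsHermitian) : ℝ :=
  ⨅ i, hM.eigenvalues i

/-!
Write `S = M^{1/2}` and `E = S - H`. If `E v = λ v` with `‖v‖ = 1`, then, since `S` and `H` are
symmetric and `H v = S v - λ v`,
`vᵀ (M - H²) v = ‖S v‖² - ‖S v - λ v‖² = λ (2 s - λ)` with `s = vᵀ S v`.
Positivity of `H` gives `s - λ = vᵀ H v > 0`, and `S ≥ √λ_min(M)` gives `s ≥ √λ_min(M)`, so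
`2 s - λ ≥ max(|λ|, √λ_min(M))` and `|vᵀ (M - H²) v| ≥ |λ| max(|λ|, √λ_min(M))`.
These numbers are the diagonal entries of `M - H²` in an orthonormal eigenbasis of `E`; hence
each is at most `‖M - H²‖₂`, and their squares sum to at most `‖M - H²‖_F²`. With
`(Σ λ²)² ≤ n Σ λ⁴` this gives both bounds, and `‖E‖₂ ≤ ‖E‖_F` gives the second half of the
minimum.
-/

open scoped Matrix.Norms.L2Operator MatrixOrder

lemma abs_mul_max_le_abs_mul_two_mul_sub {l s r : ℝ} (hr : 0 ≤ r) (hrs : r ≤ s) (hls : l < s) :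
    |l| * max |l| r ≤ |l * (2 * s - l)| := by
  have hmax : max |l| r ≤ 2 * s - l :=
    max_le (abs_le.mpr ⟨by linarith, by linarith⟩) (by linarith)
  rw [abs_mul, abs_of_pos (by linarith : 0 < 2 * s - l)]
  exact mul_le_mul_of_nonneg_left hmax (abs_nonneg l)

namespace Matrix

variable {ι : Type*} [Fintype ι]

lemma dotProduct_self_ofLp (x : EuclideanSpace ℝ ι) : x.ofLp ⬝ᵥ x.ofLp = ‖x‖ ^ 2 := by
  rw [← real_inner_self_eq_norm_sq, EuclideanSpace.inner_eq_star_dotProduct]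
  simp

lemma IsHermitian.dotProduct_mul_mulVec {A : Matrix ι ι ℝ} (hA : A.IsHermitian)
    (B : Matrix ι ι ℝ) (v w : ι → ℝ) : v ⬝ᵥ (A * B) *ᵥ w = (A *ᵥ v) ⬝ᵥ (B *ᵥ w) := by
  rw [← mulVec_mulVec, dotProduct_mulVec, ← mulVec_transpose,
    ← conjTranspose_eq_transpose_of_trivial, hA.eq]

lemma dotProduct_mulVec_mul_self_sub_mul_self {S H : Matrix ι ι ℝ} (hS : S.IsHermitian)
    (hH : H.IsHermitian) {v : ι → ℝ} {l : ℝ} (hv : (S - H) *ᵥ v = l • v) :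
    v ⬝ᵥ (S * S - H * H) *ᵥ v = l * (2 * (v ⬝ᵥ S *ᵥ v) - l * (v ⬝ᵥ v)) := by
  have hHv : H *ᵥ v = S *ᵥ v - l • v := by rw [← hv, sub_mulVec, sub_sub_cancel]
  rw [sub_mulVec, dotProduct_sub, hS.dotProduct_mul_mulVec, hH.dotProduct_mul_mulVec, hHv]
  simp only [sub_dotProduct, dotProduct_sub, smul_dotProduct, dotProduct_smul, smul_eq_mul,
    dotProduct_comm (S *ᵥ v) v]
  ring

variable [DecidableEq ι]

lemma PosSemidef.sqrt_eq_cfcSqrt {A : Matrix ι ι ℝ} (hA : A.PosSemidef) :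
    Matrix.PosSemidef.sqrt hA = CFC.sqrt A := by
  rw [CFC.sqrt_eq_real_sqrt A hA.nonneg, cfcₙ_eq_cfc, hA.1.cfc_eq, IsHermitian.cfc,
    Unitary.conjStarAlgAut_apply]
  rfl

lemma le_dotProduct_mulVec_of_algebraMap_le {A : Matrix ι ι ℝ} {r : ℝ}
    (h : algebraMap ℝ _ r ≤ A) (v : ι → ℝ) : r * (v ⬝ᵥ v) ≤ v ⬝ᵥ A *ᵥ v := by
  have := (le_iff.mp h).dotProduct_mulVec_nonneg v
  rw [star_trivial, sub_mulVec, dotProduct_sub, Algebra.algebraMap_eq_smul_one, smul_mulVec,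
    one_mulVec, dotProduct_smul, smul_eq_mul] at this
  linarith

lemma abs_mul_max_le_abs_dotProduct_mulVec_mul_self_sub_mul_self {S H : Matrix ι ι ℝ}
    (hH : H.PosDef) {r : ℝ} (hr : 0 ≤ r) (hrS : algebraMap ℝ _ r ≤ S) {v : ι → ℝ}
    (hv1 : v ⬝ᵥ v = 1) {l : ℝ} (hv : (S - H) *ᵥ v = l • v) :
    |l| * max |l| r ≤ |v ⬝ᵥ (S * S - H * H) *ᵥ v| := by
  have hS : S.IsHermitian := IsSelfAdjoint.of_nonneg ((algebraMap_nonneg _ hr).trans hrS)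
  have hrs : r ≤ v ⬝ᵥ S *ᵥ v := by
    simpa [hv1] using le_dotProduct_mulVec_of_algebraMap_le hrS v
  have hls : l < v ⬝ᵥ S *ᵥ v := by
    have hpos := hH.dotProduct_mulVec_pos (x := v) (by rintro rfl; simp at hv1)
    rw [star_trivial, show H = S - (S - H) by abel, sub_mulVec, dotProduct_sub, hv,
      dotProduct_smul, hv1, smul_eq_mul, mul_one] at hpos
    linarith
  rw [dotProduct_mulVec_mul_self_sub_mul_self hS hH.1 hv, hv1, mul_one]
  exact abs_mul_max_le_abs_mul_two_mul_sub hr hrs hls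

lemma IsHermitian.l2_opNorm_eq {𝕜 : Type*} [RCLike 𝕜] {A : Matrix ι ι 𝕜} (hA : A.IsHermitian) :
    ‖A‖ = ‖hA.eigenvalues‖ := by
  conv_lhs => rw [hA.spectral_theorem, Unitary.conjStarAlgAut_apply, ← Unitary.coe_star]
  rw [CStarRing.norm_mul_coe_unitary, CStarRing.norm_coe_unitary_mul, l2_opNorm_diagonal]
  simp [Pi.norm_def]

lemma abs_dotProduct_mulVec_le_l2_opNorm (A : Matrix ι ι ℝ) (v : ι → ℝ) :
    |v ⬝ᵥ A *ᵥ v| ≤ ‖A‖ * (v ⬝ᵥ v) := by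
  set x : EuclideanSpace ℝ ι := WithLp.toLp 2 v
  calc |v ⬝ᵥ A *ᵥ v| = |inner ℝ x (toEuclideanCLM (𝕜 := ℝ) A x)| := by
        rw [inner_toEuclideanCLM]
    _ ≤ ‖x‖ * ‖toEuclideanCLM (𝕜 := ℝ) A x‖ := abs_real_inner_le_norm _ _
    _ ≤ ‖x‖ * (‖A‖ * ‖x‖) := by gcongr; exact (toEuclideanCLM (𝕜 := ℝ) A).le_opNorm x
    _ = ‖A‖ * (v ⬝ᵥ v) := by rw [show v ⬝ᵥ v = ‖x‖ ^ 2 from dotProduct_self_ofLp x]; ring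

lemma IsHermitian.star_eigenvectorUnitary_mul_mul_eigenvectorUnitary {A : Matrix ι ι ℝ}
    (hA : A.IsHermitian) :
    star (hA.eigenvectorUnitary : Matrix ι ι ℝ) * A * hA.eigenvectorUnitary =
      diagonal hA.eigenvalues := by
  simpa [Unitary.conjStarAlgAut_star_apply] using hA.conjStarAlgAut_star_eigenvectorUnitary

lemma IsHermitian.star_eigenvectorUnitary_mul_mul_eigenvectorUnitary_apply_self
    {A : Matrix ι ι ℝ} (hA : A.IsHermitian) (R : Matrix ι ι ℝ) (i : ι) :
    (star (hA.eigenvectorUnitary : Matrix ι ι ℝ) * R * hA.eigenvectorUnitary) i i =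
      ⇑(hA.eigenvectorBasis i) ⬝ᵥ R *ᵥ ⇑(hA.eigenvectorBasis i) := by
  simp only [mul_apply, mulVec, dotProduct, star_apply, star_trivial, eigenvectorUnitary_apply,
    Finset.sum_mul, Finset.mul_sum]
  rw [Finset.sum_comm]
  exact Finset.sum_congr rfl fun k _ => Finset.sum_congr rfl fun l _ => by ring

lemma IsHermitian.dotProduct_self_eigenvectorBasis {A : Matrix ι ι ℝ} (hA : A.IsHermitian)
    (i : ι) : ⇑(hA.eigenvectorBasis i) ⬝ᵥ ⇑(hA.eigenvectorBasis i) = 1 := by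
  rw [dotProduct_self_ofLp, hA.eigenvectorBasis.orthonormal.1 i, one_pow]

end Matrix

section

variable {n : ℕ}

lemma specNorm_eq_l2_opNorm (A : Matrix (Fin n) (Fin n) ℝ) : specNorm A = ‖A‖ := by
  have hB : (Aᴴ * A).IsHermitian := isHermitian_conjTranspose_mul_self A
  have hμ := (posSemidef_conjTranspose_mul_self A).eigenvalues_nonneg
  have hnorm : ‖A‖ ^ 2 = ‖hB.eigenvalues‖ := by
    rw [sq, ← l2_opNorm_conjTranspose_mul_self, hB.l2_opNorm_eq]
  have hspec : specNorm A = ⨆ i, √(hB.eigenvalues i) := by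
    simp only [specNorm, conjTranspose_eq_transpose_of_trivial]
  rw [hspec]
  apply le_antisymm
  · refine Real.iSup_le (fun i => ?_) (norm_nonneg _)
    rw [← Real.sqrt_sq (norm_nonneg A), hnorm]
    exact Real.sqrt_le_sqrt ((le_abs_self _).trans (norm_le_pi_norm hB.eigenvalues i))
  · refine pow_le_pow_iff_left₀ (norm_nonneg _) (Real.iSup_nonneg fun _ => Real.sqrt_nonneg _)
      two_ne_zero |>.mp ?_
    rw [hnorm]
    refine pi_norm_le_iff_of_nonneg (sq_nonneg _) |>.mpr fun i => ?_
    rw [Real.norm_of_nonneg (hμ i), ← Real.sq_sqrt (hμ i)]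
    exact pow_le_pow_left₀ (Real.sqrt_nonneg _)
      (le_ciSup (f := fun i => √(hB.eigenvalues i)) (Set.finite_range _).bddAbove i) 2

lemma frobNorm_nonneg (A : Matrix (Fin n) (Fin n) ℝ) : 0 ≤ frobNorm A := Real.sqrt_nonneg _

lemma frobNorm_sq (A : Matrix (Fin n) (Fin n) ℝ) : frobNorm A ^ 2 = ∑ i, ∑ j, A i j ^ 2 :=
  Real.sq_sqrt (by positivity)

lemma frobNorm_sq_eq_trace (A : Matrix (Fin n) (Fin n) ℝ) :
    frobNorm A ^ 2 = trace (Aᴴ * A) := by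
  rw [frobNorm_sq, conjTranspose_eq_transpose_of_trivial, Finset.sum_comm]
  simp only [trace, diag, mul_apply, transpose_apply, sq]

lemma frobNorm_star_mul_mul {U : Matrix (Fin n) (Fin n) ℝ} (hU : U ∈ unitaryGroup (Fin n) ℝ)
    (A : Matrix (Fin n) (Fin n) ℝ) : frobNorm (star U * A * U) = frobNorm A := by
  have hUU : U * star U = 1 := mem_unitaryGroup_iff.mp hU
  have hconj : (star U * A * U)ᴴ * (star U * A * U) = star U * (Aᴴ * A) * U := by
    simp only [← star_eq_conjTranspose, star_mul, star_star, Matrix.mul_assoc]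
    rw [← Matrix.mul_assoc U (star U), hUU, Matrix.one_mul]
  rw [← Real.sqrt_sq (frobNorm_nonneg (star U * A * U)), frobNorm_sq_eq_trace, hconj,
    trace_mul_cycle, hUU, Matrix.one_mul, ← frobNorm_sq_eq_trace,
    Real.sqrt_sq (frobNorm_nonneg A)]

lemma sum_sq_diag_le_frobNorm_sq (A : Matrix (Fin n) (Fin n) ℝ) :
    ∑ i, A i i ^ 2 ≤ frobNorm A ^ 2 := by
  rw [frobNorm_sq]
  exact Finset.sum_le_sum fun i _ =>
    Finset.single_le_sum (fun j _ => sq_nonneg (A i j)) (Finset.mem_univ i)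

namespace Matrix.IsHermitian

variable {A : Matrix (Fin n) (Fin n) ℝ}

lemma frobNorm_sq_eq (hA : A.IsHermitian) : frobNorm A ^ 2 = ∑ i, hA.eigenvalues i ^ 2 := by
  rw [← frobNorm_star_mul_mul hA.eigenvectorUnitary.2,
    star_eigenvectorUnitary_mul_mul_eigenvectorUnitary, frobNorm_sq]
  refine Finset.sum_congr rfl fun i _ => ?_
  rw [Finset.sum_eq_single i (fun j _ hji => by simp [diagonal_apply_ne _ hji.symm]) (by simp)]
  simp

lemma sum_sq_dotProduct_mulVec_eigenvectorBasis_le (hA : A.IsHermitian)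
    (R : Matrix (Fin n) (Fin n) ℝ) :
    ∑ i, (⇑(hA.eigenvectorBasis i) ⬝ᵥ R *ᵥ ⇑(hA.eigenvectorBasis i)) ^ 2 ≤ frobNorm R ^ 2 := by
  simp only [← star_eigenvectorUnitary_mul_mul_eigenvectorUnitary_apply_self]
  rw [← frobNorm_star_mul_mul hA.eigenvectorUnitary.2 R]
  exact sum_sq_diag_le_frobNorm_sq _

lemma specNorm_eq (hA : A.IsHermitian) : specNorm A = ‖hA.eigenvalues‖ := by
  rw [specNorm_eq_l2_opNorm, hA.l2_opNorm_eq]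

lemma specNorm_le_frobNorm (hA : A.IsHermitian) : specNorm A ≤ frobNorm A := by
  rw [hA.specNorm_eq]
  refine pi_norm_le_iff_of_nonneg (frobNorm_nonneg A) |>.mpr fun i => ?_
  rw [Real.norm_eq_abs]
  refine Real.abs_le_sqrt ?_
  rw [← frobNorm_sq, hA.frobNorm_sq_eq]
  exact Finset.single_le_sum (fun j _ => sq_nonneg (hA.eigenvalues j)) (Finset.mem_univ i)

lemma frobNorm_sq_le_sqrt_card_mul (hA : A.IsHermitian) (R : Matrix (Fin n) (Fin n) ℝ)
    (h : ∀ i, hA.eigenvalues i ^ 2 ≤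
      |⇑(hA.eigenvectorBasis i) ⬝ᵥ R *ᵥ ⇑(hA.eigenvectorBasis i)|) :
    frobNorm A ^ 2 ≤ √n * frobNorm R := by
  refine pow_le_pow_iff_left₀ (sq_nonneg _) (mul_nonneg (Real.sqrt_nonneg _) (frobNorm_nonneg R))
    two_ne_zero |>.mp ?_
  calc (frobNorm A ^ 2) ^ 2 = (∑ i, hA.eigenvalues i ^ 2) ^ 2 := by rw [hA.frobNorm_sq_eq]
    _ ≤ n * ∑ i, (hA.eigenvalues i ^ 2) ^ 2 := by
        simpa using
          sq_sum_le_card_mul_sum_sq (s := Finset.univ) (f := fun i => hA.eigenvalues i ^ 2)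
    _ ≤ n * ∑ i, (⇑(hA.eigenvectorBasis i) ⬝ᵥ R *ᵥ ⇑(hA.eigenvectorBasis i)) ^ 2 := by
        refine mul_le_mul_of_nonneg_left (Finset.sum_le_sum fun i _ => ?_) (Nat.cast_nonneg n)
        exact (pow_le_pow_left₀ (sq_nonneg _) (h i) 2).trans (sq_abs _).le
    _ ≤ n * frobNorm R ^ 2 := by
        gcongr; exact hA.sum_sq_dotProduct_mulVec_eigenvectorBasis_le R
    _ = (√n * frobNorm R) ^ 2 := by rw [mul_pow, Real.sq_sqrt (Nat.cast_nonneg n)]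

lemma specNorm_le_div (hA : A.IsHermitian) (R : Matrix (Fin n) (Fin n) ℝ) {r : ℝ} (hr : 0 ≤ r)
    (h : ∀ i, |hA.eigenvalues i| ≤
      |⇑(hA.eigenvectorBasis i) ⬝ᵥ R *ᵥ ⇑(hA.eigenvectorBasis i)| / r) :
    specNorm A ≤ specNorm R / r := by
  rw [hA.specNorm_eq, specNorm_eq_l2_opNorm]
  refine pi_norm_le_iff_of_nonneg (by positivity) |>.mpr fun i => (h i).trans ?_
  gcongr
  simpa only [hA.dotProduct_self_eigenvectorBasis i, mul_one] using
    abs_dotProduct_mulVec_le_l2_opNorm R (hA.eigenvectorBasis i)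

end Matrix.IsHermitian

section lambdaMin

variable {M : Matrix (Fin n) (Fin n) ℝ}

lemma lambdaMin_le (hM : M.IsHermitian) (i : Fin n) : lambdaMin hM ≤ hM.eigenvalues i :=
  ciInf_le (Set.finite_range _).bddBelow i

lemma lambdaMin_pos [Nonempty (Fin n)] (hM : M.PosDef) : 0 < lambdaMin hM.1 := by
  obtain ⟨i, hi⟩ := exists_eq_ciInf_of_finite (f := hM.1.eigenvalues)
  rw [lambdaMin, ← hi]
  exact hM.eigenvalues_pos i

lemma algebraMap_sqrt_lambdaMin_le_cfcSqrt (hM : M.PosSemidef) :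
    algebraMap ℝ _ √(lambdaMin hM.1) ≤ CFC.sqrt M := by
  rw [CFC.sqrt_eq_real_sqrt M hM.nonneg, cfcₙ_eq_cfc]
  refine algebraMap_le_cfc _ _ M fun x hx => ?_
  obtain ⟨i, rfl⟩ := hM.1.spectrum_real_eq_range_eigenvalues ▸ hx
  exact Real.sqrt_le_sqrt (lambdaMin_le hM.1 i)

lemma eigenvalues_cfcSqrt_sub_sq_le_and_abs_le_div {H : Matrix (Fin n) (Fin n) ℝ} (hM : M.PosDef)
    (hH : H.PosDef) (hE : (CFC.sqrt M - H).IsHermitian) (i : Fin n) :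
    hE.eigenvalues i ^ 2 ≤ |⇑(hE.eigenvectorBasis i) ⬝ᵥ (M - H ^ 2) *ᵥ ⇑(hE.eigenvectorBasis i)| ∧
      |hE.eigenvalues i| ≤
        |⇑(hE.eigenvectorBasis i) ⬝ᵥ (M - H ^ 2) *ᵥ ⇑(hE.eigenvectorBasis i)| /
          √(lambdaMin hM.1) := by
  have : Nonempty (Fin n) := ⟨i⟩
  have key := abs_mul_max_le_abs_dotProduct_mulVec_mul_self_sub_mul_self hH (Real.sqrt_nonneg _)
    (algebraMap_sqrt_lambdaMin_le_cfcSqrt hM.posSemidef) (hE.dotProduct_self_eigenvectorBasis i)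
    (hE.mulVec_eigenvectorBasis i)
  rw [CFC.sqrt_mul_sqrt_self M hM.posSemidef.nonneg, ← sq] at key
  constructor
  · rw [sq, ← abs_mul_abs_self]
    exact (mul_le_mul_of_nonneg_left (le_max_left _ _) (abs_nonneg _)).trans key
  · rw [le_div_iff₀ (Real.sqrt_pos.2 (lambdaMin_pos hM))]
    exact (mul_le_mul_of_nonneg_left (le_max_right _ _) (abs_nonneg _)).trans key

end lambdaMin

end

theorem forward_error {n : ℕ} (M H : Matrix (Fin n) (Fin n) ℝ)
    (hM : M.PosDef) (hH : H.PosDef) :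
    frobNorm (hM.posSemidef.sqrt - H) ≤ Real.sqrt (Real.sqrt n * frobNorm (M - H ^ 2)) ∧
    specNorm (hM.posSemidef.sqrt - H) ≤
      min (specNorm (M - H ^ 2) / Real.sqrt (lambdaMin hM.1))
        (Real.sqrt (Real.sqrt n * frobNorm (M - H ^ 2))) := by
  rw [hM.posSemidef.sqrt_eq_cfcSqrt]
  have hE : (CFC.sqrt M - H).IsHermitian :=
    IsHermitian.sub (IsSelfAdjoint.of_nonneg (CFC.sqrt_nonneg M)) hH.1
  have key := eigenvalues_cfcSqrt_sub_sq_le_and_abs_le_div hM hH hE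
  have hfrob : frobNorm (CFC.sqrt M - H) ≤ √(√n * frobNorm (M - H ^ 2)) :=
    Real.le_sqrt_of_sq_le (hE.frobNorm_sq_le_sqrt_card_mul _ fun i => (key i).1)
  exact ⟨hfrob, le_min (hE.specNorm_le_div _ (Real.sqrt_nonneg _) fun i => (key i).2)
    (hE.specNorm_le_frobNorm.trans hfrob)⟩
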